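/- arXiv:2408.01906 — 2 statements merged into one kernel-verified Lean document; each statement's English description precedes it below -/
import Mathlib

section
/- Let m ≥ 2, n = 2^m − 1, and let a be an odd integer with 1 ≤ a ≤ n − 1. If l_a is even (which forces m to be even), then the cosets C_a and C_{n−a} are both contained in T_{(1,m)} or both contained in T_{(0,m)}, i.e., v_a ≡ v_{n−a} (mod 2). If m is odd (so l_a is odd), then exactly one of C_a and C_{n−a} is contained in T_{(1,m)}, i.e., v_a + v_{n−a} ≡ 1 (mod 2). -/
open Polynomial

noncomputable def wt2 (a : ℕ) : ℕ := (Nat.digits 2 a).sum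

noncomputable def ell (m i : ℕ) : ℕ :=
  sInf {l : ℕ | 0 < l ∧ i * 2 ^ l % (2 ^ m - 1) = i % (2 ^ m - 1)}

noncomputable def coset (m i : ℕ) : Finset ℕ :=
  (Finset.range (ell m i)).image (fun j => i * 2 ^ j % (2 ^ m - 1))

noncomputable def rho (m i : ℕ) : ℕ := ((coset m i).filter (fun x => x % 2 = 0)).card

noncomputable def vv (m i : ℕ) : ℕ := m * rho m i / ell m i % 2

noncomputable def Tset (m j : ℕ) : Finset ℕ :=
  (Finset.range (2 ^ m - 1)).filter (fun i => vv m i = j)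

noncomputable def Nset (m j : ℕ) : Finset ℕ :=
  (Finset.range (2 ^ m - 1)).filter (fun a => a ≠ 0 ∧ wt2 a % 2 = j)

noncomputable def epsilon (h a : ℕ) : ℕ :=
  if a = 2 ^ h - 1 then 1 else sInf {t : ℕ | 2 ^ h - 1 ≤ 2 ^ t * a}

noncomputable def kappa (h a : ℕ) : ℕ := epsilon h a % 2

noncomputable def leader (m i : ℕ) : ℕ := sInf {x : ℕ | x ∈ coset m i}

noncomputable def uu (m h i : ℕ) : ℕ :=
  if leader m i = 1 then (vv m 1 + h + 1) % 2
  else if leader m i % 2 = 1 ∧ leader m i ≤ 2 ^ h - 1 then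
    (kappa h (leader m i) + vv m (leader m i)) % 2
  else vv m (leader m i)

noncomputable def Dset (m h j : ℕ) : Finset ℕ :=
  (Finset.range (2 ^ m - 1)).filter (fun i => uu m h i = j)

noncomputable def cyclicCode (m : ℕ) (α : GaloisField 2 m) (T : Set ℕ) :
    Submodule (ZMod 2) (Polynomial (ZMod 2)) :=
  Polynomial.degreeLT (ZMod 2) (2 ^ m - 1) ⊓
    ⨅ j ∈ T, LinearMap.ker (Polynomial.aeval (α ^ j)).toLinearMap

def minDistGE (C : Submodule (ZMod 2) (Polynomial (ZMod 2))) (d : ℕ) : Prop :=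
  ∀ c ∈ C, c ≠ 0 → d ≤ c.support.card

/-!
Write n = 2^m - 1. For 0 < a < n, multiplication by 2 modulo n commutes with the involution
x ↦ n - x, so C_{n-a} is the image of C_a under it. As n is odd, this involution swaps parities,
hence l_{n-a} = l_a and ρ_{n-a} + ρ_a = l_a. Since l_a divides m, v_a ≡ (m / l_a) ρ_a (mod 2), and
the two values (m / l_a) ρ_a, (m / l_a) ρ_{n-a} add up to m: their parities agree when m is even
(in particular when l_a is even) and differ when m is odd.
-/

lemma sub_mul_mod_of_mul_mod_ne_zero {n a c : ℕ} (ha : a ≤ n) (h : a * c % n ≠ 0) :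
    (n - a) * c % n = n - a * c % n := by
  have hn : 0 < n := Nat.pos_of_ne_zero fun hn0 => h (by simp [show a = 0 by omega])
  have hsum : (n - a) * c + a * c = n * c := by rw [← Nat.add_mul, Nat.sub_add_cancel ha]
  have hdvd : n ∣ (n - a) * c % n + a * c % n := by
    rw [Nat.dvd_iff_mod_eq_zero, ← Nat.add_mod, hsum, Nat.mul_mod_right]
  obtain ⟨k, hk⟩ := hdvd
  have hs := Nat.mod_lt ((n - a) * c) hn
  have hr := Nat.mod_lt (a * c) hn
  rcases k with _ | _ | k
  · omega
  · omega
  · nlinarith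

section

variable {m : ℕ}

lemma two_pow_modEq_one (m : ℕ) : 2 ^ m ≡ 1 [MOD 2 ^ m - 1] :=
  Nat.modEq_sub Nat.one_le_two_pow

lemma mul_two_pow_modEq_self (m a : ℕ) : a * 2 ^ m ≡ a [MOD 2 ^ m - 1] := by
  simpa using (two_pow_modEq_one m).mul_left a

lemma two_pow_sub_one_mod_two (hm : 0 < m) : (2 ^ m - 1) % 2 = 1 := by
  rw [Nat.two_pow_sub_one_mod_two, Nat.one_mod_eq_one.mpr]
  exact (Nat.one_lt_two_pow hm.ne').ne'

lemma coprime_two_pow_two_pow_sub_one (hm : 0 < m) (j : ℕ) :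
    Nat.Coprime (2 ^ j) (2 ^ m - 1) :=
  (Nat.coprime_two_left.mpr (Nat.odd_iff.mpr (two_pow_sub_one_mod_two hm))).pow_left j

lemma mul_two_pow_mod_ne_zero {a : ℕ} (hm : 0 < m) (ha0 : 0 < a) (han : a < 2 ^ m - 1) (j : ℕ) :
    a * 2 ^ j % (2 ^ m - 1) ≠ 0 := by
  intro h
  have hdvd : 2 ^ m - 1 ∣ a :=
    (coprime_two_pow_two_pow_sub_one hm j).symm.dvd_of_dvd_mul_right (Nat.dvd_of_mod_eq_zero h)
  exact absurd (Nat.le_of_dvd ha0 hdvd) (by omega)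

lemma mul_pow_mul_modEq {n a x l : ℕ} (h : a * x ^ l ≡ a [MOD n]) (q : ℕ) :
    a * x ^ (l * q) ≡ a [MOD n] := by
  induction q with
  | zero => simp [Nat.ModEq.refl]
  | succ q ih =>
    rw [Nat.mul_succ, pow_add, ← mul_assoc]
    exact (ih.mul_right _).trans h

lemma ell_pos_and_modEq (hm : 0 < m) (a : ℕ) :
    0 < ell m a ∧ a * 2 ^ ell m a ≡ a [MOD 2 ^ m - 1] :=
  Nat.sInf_mem (s := {l | 0 < l ∧ a * 2 ^ l % (2 ^ m - 1) = a % (2 ^ m - 1)})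
    ⟨m, hm, mul_two_pow_modEq_self m a⟩

lemma not_modEq_of_lt_ell {a t : ℕ} (ht : 0 < t) (htl : t < ell m a) :
    ¬ a * 2 ^ t ≡ a [MOD 2 ^ m - 1] :=
  fun h => Nat.notMem_of_lt_sInf htl ⟨ht, h⟩

lemma ell_dvd (hm : 0 < m) (a : ℕ) : ell m a ∣ m := by
  obtain ⟨hl0, hl⟩ := ell_pos_and_modEq hm a
  set l := ell m a
  have hperiod : a * 2 ^ (m % l) ≡ a [MOD 2 ^ m - 1] :=
    calc a * 2 ^ (m % l) ≡ a * 2 ^ (l * (m / l)) * 2 ^ (m % l) [MOD 2 ^ m - 1] :=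
          ((mul_pow_mul_modEq hl _).mul_right _).symm
      _ = a * 2 ^ m := by rw [mul_assoc, ← pow_add, Nat.div_add_mod]
      _ ≡ a [MOD 2 ^ m - 1] := mul_two_pow_modEq_self m a
  by_contra hndvd
  exact not_modEq_of_lt_ell (Nat.pos_of_ne_zero (mt Nat.dvd_of_mod_eq_zero hndvd))
    (Nat.mod_lt m hl0) hperiod

lemma card_coset (hm : 0 < m) (a : ℕ) : (coset m a).card = ell m a := by
  have hne : ∀ i j, i < j → j < ell m a → ¬ a * 2 ^ i ≡ a * 2 ^ j [MOD 2 ^ m - 1] := by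
    intro i j hij hj h
    refine not_modEq_of_lt_ell (Nat.sub_pos_of_lt hij) (show j - i < ell m a by omega) ?_
    refine Nat.ModEq.cancel_right_of_coprime (coprime_two_pow_two_pow_sub_one hm i).symm ?_
    rwa [mul_assoc, ← pow_add, Nat.sub_add_cancel hij.le, Nat.ModEq.comm]
  rw [coset, Finset.card_image_of_injOn, Finset.card_range]
  intro i hi j hj hij
  simp only [Finset.coe_range, Set.mem_Iio] at hi hj
  rcases lt_trichotomy i j with h | h | h
  · exact absurd hij (hne i j h hj)
  · exact h
  · exact absurd hij.symm (hne j i h hi)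

lemma vv_eq (hm : 0 < m) (a : ℕ) : vv m a = m / ell m a * rho m a % 2 := by
  rw [vv, Nat.mul_div_right_comm (ell_dvd hm a)]

lemma sub_mul_two_pow_mod {a : ℕ} (hm : 0 < m) (ha0 : 0 < a) (han : a < 2 ^ m - 1) (j : ℕ) :
    (2 ^ m - 1 - a) * 2 ^ j % (2 ^ m - 1) = 2 ^ m - 1 - a * 2 ^ j % (2 ^ m - 1) :=
  sub_mul_mod_of_mul_mod_ne_zero han.le (mul_two_pow_mod_ne_zero hm ha0 han j)

lemma ell_complement {a : ℕ} (hm : 0 < m) (ha0 : 0 < a) (han : a < 2 ^ m - 1) :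
    ell m (2 ^ m - 1 - a) = ell m a := by
  unfold ell
  congr 1
  ext t
  refine and_congr_right fun _ => ?_
  have hlt := Nat.mod_lt (a * 2 ^ t) (show 0 < 2 ^ m - 1 by omega)
  rw [sub_mul_two_pow_mod hm ha0 han, Nat.mod_eq_of_lt (show 2 ^ m - 1 - a < 2 ^ m - 1 by omega),
    Nat.mod_eq_of_lt han]
  omega

lemma coset_complement {a : ℕ} (hm : 0 < m) (ha0 : 0 < a) (han : a < 2 ^ m - 1) :
    coset m (2 ^ m - 1 - a) = (coset m a).image (2 ^ m - 1 - ·) := by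
  rw [coset, coset, ell_complement hm ha0 han, Finset.image_image]
  exact Finset.image_congr fun j _ => sub_mul_two_pow_mod hm ha0 han j

lemma rho_complement_add_rho {a : ℕ} (hm : 0 < m) (ha0 : 0 < a) (han : a < 2 ^ m - 1) :
    rho m (2 ^ m - 1 - a) + rho m a = ell m a := by
  have hodd := two_pow_sub_one_mod_two hm
  have hlt : ∀ x ∈ coset m a, x < 2 ^ m - 1 := by
    simp only [coset, Finset.mem_image]
    rintro _ ⟨j, -, rfl⟩
    exact Nat.mod_lt _ (by omega)
  have hfilter : (coset m (2 ^ m - 1 - a)).filter (fun x => x % 2 = 0) =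
      ((coset m a).filter (fun x => ¬ x % 2 = 0)).image (2 ^ m - 1 - ·) := by
    rw [coset_complement hm ha0 han, Finset.filter_image]
    congr 1
    exact Finset.filter_congr fun x hx => by have := hlt x hx; omega
  have hinj : Set.InjOn (2 ^ m - 1 - ·) ((coset m a).filter (fun x => ¬ x % 2 = 0)) := by
    intro x hx y hy hxy
    have := hlt x (Finset.mem_filter.mp hx).1
    have := hlt y (Finset.mem_filter.mp hy).1
    simp only at hxy
    omega
  rw [rho, rho, hfilter, Finset.card_image_of_injOn hinj, add_comm,
    Finset.card_filter_add_card_filter_not, card_coset hm]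

end

theorem stmt2_general (m a : ℕ) (hm : 2 ≤ m) (ha2 : 1 ≤ a)
    (ha3 : a ≤ 2 ^ m - 1 - 1) :
    (Even (ell m a) → vv m a = vv m (2 ^ m - 1 - a)) ∧
    (Odd m → (vv m a + vv m (2 ^ m - 1 - a)) % 2 = 1) := by
  have hm0 : 0 < m := by omega
  have han : a < 2 ^ m - 1 := by omega
  set k := m / ell m a
  have hva : vv m a = k * rho m a % 2 := vv_eq hm0 a
  have hvb : vv m (2 ^ m - 1 - a) = k * rho m (2 ^ m - 1 - a) % 2 := by
    rw [vv_eq hm0, ell_complement hm0 ha2 han]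
  have hsum : k * rho m a + k * rho m (2 ^ m - 1 - a) = m := by
    rw [← Nat.mul_add, add_comm (rho m a), rho_complement_add_rho hm0 ha2 han,
      Nat.div_mul_cancel (ell_dvd hm0 a)]
  refine ⟨fun hl => ?_, fun hmodd => ?_⟩
  · have h2m : 2 ∣ m := (even_iff_two_dvd.mp hl).trans (ell_dvd hm0 a)
    omega
  · have := Nat.odd_iff.mp hmodd
    omega

theorem stmt2 (m a : ℕ) (hm : 2 ≤ m) (ha1 : a % 2 = 1) (ha2 : 1 ≤ a)
    (ha3 : a ≤ 2 ^ m - 1 - 1) :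
    (Even (ell m a) → vv m a = vv m (2 ^ m - 1 - a)) ∧
    (Odd m → (vv m a + vv m (2 ^ m - 1 - a)) % 2 = 1) :=
  stmt2_general m a hm ha2 ha3
end

section
/- Let m ≡ 0 (mod 4) with m ≥ 4, n = 2^m − 1, and a = 2^{(m+2)/2} − 1. Then for every integer k with 1 ≤ k ≤ 2^{(m−2)/2} or with 2^m − 2^{(m−2)/2} − 1 ≤ k ≤ 2^m − 2, the residue a·k mod n lies in T_{(1,m)}. -/
open Polynomial

/-
Multiplication by 2 modulo n = 2^m - 1 rotates the m-bit expansion of i < n, so among the m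
shifts i·2^j mod n exactly m - wt(i) are even, one per zero bit of i. These shifts run through
the coset C_i exactly m / l_i times, hence m·ρ_i / l_i = m - wt(i), and i ∈ T_(1,m) iff
m - wt(i) is odd.

With m = 2s and a = 2^(s+1) - 1, for 1 ≤ k ≤ 2^(s-1) the product
a·k = (k-1)·2^(s+1) + (a - (k-1)) is below n and has weight s + 1, and m - (s + 1) = s - 1 is odd
because 4 ∣ m. For k in the upper range, a·k ≡ n - a·(n - k) is the bitwise complement of
a·(n - k), of weight s - 1.
-/

lemma wt2_eq_mod_two_add (x : ℕ) : wt2 x = x % 2 + wt2 (x / 2) := by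
  rcases Nat.eq_zero_or_pos x with rfl | hx
  · simp [wt2]
  · simp [wt2, Nat.digits_def' (by norm_num : 1 < 2) hx]

lemma wt2_two_mul_add (x : ℕ) {b : ℕ} (hb : b < 2) : wt2 (2 * x + b) = b + wt2 x := by
  rw [wt2_eq_mod_two_add, show (2 * x + b) / 2 = x by omega, show (2 * x + b) % 2 = b by omega]

lemma count_bits_eq_wt2 (t : ℕ) :
    ∀ x < 2 ^ t, Nat.count (fun b => x / 2 ^ b % 2 = 1) t = wt2 x := by
  induction t with
  | zero =>
    intro x hx
    obtain rfl : x = 0 := by simpa using hx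
    simp [wt2]
  | succ t ih =>
    intro x hx
    rw [Nat.count_succ']
    simp only [pow_succ', ← Nat.div_div_eq_div_mul]
    rw [ih (x / 2) (by omega), wt2_eq_mod_two_add x]
    rcases Nat.mod_two_eq_zero_or_one x with h | h <;> simp [h, add_comm]

lemma wt2_le_of_lt_two_pow {t x : ℕ} (hx : x < 2 ^ t) : wt2 x ≤ t :=
  count_bits_eq_wt2 t x hx ▸ Nat.count_le _

lemma wt2_mul_two_pow_add (t : ℕ) :
    ∀ q r, r < 2 ^ t → wt2 (q * 2 ^ t + r) = wt2 q + wt2 r := by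
  induction t with
  | zero =>
    intro q r hr
    obtain rfl : r = 0 := by omega
    simp [wt2]
  | succ t ih =>
    intro q r hr
    have he : q * 2 ^ (t + 1) + r = 2 * (q * 2 ^ t + r / 2) + r % 2 := by
      rw [pow_succ, ← mul_assoc]; omega
    rw [he, wt2_two_mul_add _ (Nat.mod_lt _ two_pos), ih q (r / 2) (by omega),
      wt2_eq_mod_two_add r]
    omega

lemma wt2_two_pow_sub_one_sub (t : ℕ) : ∀ x < 2 ^ t, wt2 (2 ^ t - 1 - x) = t - wt2 x := by
  induction t with
  | zero =>
    intro x hx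
    obtain rfl : x = 0 := by simpa using hx
    simp [wt2]
  | succ t ih =>
    intro x hx
    have he : 2 ^ (t + 1) - 1 - x = 2 * (2 ^ t - 1 - x / 2) + (1 - x % 2) := by
      rw [pow_succ]; omega
    rw [he, wt2_two_mul_add _ (by omega), ih (x / 2) (by omega), wt2_eq_mod_two_add x]
    have := wt2_le_of_lt_two_pow (show x / 2 < 2 ^ t by omega)
    omega

lemma wt2_two_pow_sub_one_mul {t k : ℕ} (hk0 : 1 ≤ k) (hk : k ≤ 2 ^ t) :
    wt2 ((2 ^ t - 1) * k) = t := by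
  have hsplit : (2 ^ t - 1) * k = (k - 1) * 2 ^ t + (2 ^ t - 1 - (k - 1)) := by
    have hT : 1 ≤ 2 ^ t := Nat.one_le_two_pow
    zify [hT, hk0, show k - 1 ≤ 2 ^ t - 1 by omega]
    ring
  rw [hsplit, wt2_mul_two_pow_add t _ _ (by omega), wt2_two_pow_sub_one_sub t _ (by omega)]
  have := wt2_le_of_lt_two_pow (show k - 1 < 2 ^ t by omega)
  omega

lemma Nat.count_add_count_not (p : ℕ → Prop) [DecidablePred p] (n : ℕ) :
    Nat.count p n + Nat.count (fun k => ¬ p k) n = n := by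
  simp only [Nat.count_eq_card_filter_range]
  rw [Finset.card_filter_add_card_filter_not, Finset.card_range]

lemma Nat.count_mul_of_periodic {p : ℕ → Prop} [DecidablePred p] {L : ℕ}
    (hp : Function.Periodic p L) (t : ℕ) : Nat.count p (L * t) = t * Nat.count p L := by
  induction t with
  | zero => simp
  | succ t ih =>
    rw [Nat.mul_succ, Nat.count_add']
    simp only [show ∀ k, p (k + L) = p k from hp]
    rw [ih, Nat.succ_mul]

def cyclicShift (m x : ℕ) : ℕ := 2 * x % (2 ^ m - 1)

section CyclicShift

variable {m i : ℕ}

open Function Finset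

lemma cyclicShift_iterate (hi : i < 2 ^ m - 1) (j : ℕ) :
    (cyclicShift m)^[j] i = i * 2 ^ j % (2 ^ m - 1) := by
  induction j with
  | zero => simp [Nat.mod_eq_of_lt hi]
  | succ j ih =>
    rw [iterate_succ_apply', ih, cyclicShift, Nat.mul_mod_mod, pow_succ]
    ring_nf

lemma mul_two_pow_mod_eq_rotate (hi : i < 2 ^ m - 1) {j : ℕ} (hj : j ≤ m) :
    i * 2 ^ j % (2 ^ m - 1) = i / 2 ^ (m - j) + i % 2 ^ (m - j) * 2 ^ j := by
  set A := 2 ^ j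
  set B := 2 ^ (m - j)
  have hAB : 2 ^ m = B * A := by rw [← pow_add]; congr 1; omega
  have hA : 0 < A := by positivity
  have hB : 0 < B := by positivity
  have hdiv := Nat.div_add_mod i B
  set q := i / B
  set r := i % B
  have hq : q < A := Nat.div_lt_of_lt_mul (by rw [← hAB]; omega)
  have hr : r < B := Nat.mod_lt i hB
  refine Nat.mod_eq_of_modEq ?_ ?_
  · calc i * A = 2 ^ m * q + r * A := by rw [hAB, ← hdiv]; ring
      _ ≡ 1 * q + r * A [MOD 2 ^ m - 1] :=
        ((Nat.modEq_sub Nat.one_le_two_pow).mul_right q).add_right _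
      _ = q + r * A := by rw [one_mul]
  · suffices q + r * A + 1 < B * A by omega
    have hi' : B * q + r + 1 < B * A := by omega
    rcases Nat.lt_or_ge (r + 1) B with h | h
    · nlinarith
    · have : q + 1 < A := by nlinarith
      nlinarith


lemma iterate_cyclicShift_mod_two (hi : i < 2 ^ m - 1) {j : ℕ} (hj0 : 1 ≤ j) (hj : j ≤ m) :
    (cyclicShift m)^[j] i % 2 = i / 2 ^ (m - j) % 2 := by
  obtain ⟨c, rfl⟩ : ∃ c, j = c + 1 := ⟨j - 1, by omega⟩
  rw [cyclicShift_iterate hi, mul_two_pow_mod_eq_rotate hi hj, pow_succ, ← mul_assoc,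
    Nat.add_mul_mod_self_right]

lemma isPeriodicPt_cyclicShift_iff (hi : i < 2 ^ m - 1) (l : ℕ) :
    IsPeriodicPt (cyclicShift m) l i ↔ i * 2 ^ l % (2 ^ m - 1) = i % (2 ^ m - 1) := by
  rw [IsPeriodicPt, IsFixedPt, cyclicShift_iterate hi, Nat.mod_eq_of_lt hi]

lemma isPeriodicPt_cyclicShift_self (hi : i < 2 ^ m - 1) : IsPeriodicPt (cyclicShift m) m i := by
  rw [isPeriodicPt_cyclicShift_iff hi]
  exact ((Nat.modEq_sub Nat.one_le_two_pow).mul_left i).trans (by rw [mul_one])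

lemma ell_eq_minimalPeriod (hm : 0 < m) (hi : i < 2 ^ m - 1) :
    ell m i = minimalPeriod (cyclicShift m) i := by
  have hmem : m ∈ {l : ℕ | 0 < l ∧ i * 2 ^ l % (2 ^ m - 1) = i % (2 ^ m - 1)} :=
    ⟨hm, (isPeriodicPt_cyclicShift_iff hi m).1 (isPeriodicPt_cyclicShift_self hi)⟩
  obtain ⟨hpos, hell⟩ := Nat.sInf_mem ⟨m, hmem⟩
  have hper := (isPeriodicPt_cyclicShift_iff hi _).2 hell
  refine le_antisymm (Nat.sInf_le ⟨hper.minimalPeriod_pos hpos, ?_⟩)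
    (hper.minimalPeriod_le hpos)
  exact (isPeriodicPt_cyclicShift_iff hi _).1 (isPeriodicPt_minimalPeriod _ _)

lemma rho_eq_count (hm : 0 < m) (hi : i < 2 ^ m - 1) :
    rho m i = Nat.count (fun j => (cyclicShift m)^[j] i % 2 = 0)
      (minimalPeriod (cyclicShift m) i) := by
  have hcoset : coset m i =
      (range (minimalPeriod (cyclicShift m) i)).image fun j => (cyclicShift m)^[j] i := by
    simp only [coset, cyclicShift_iterate hi, ell_eq_minimalPeriod hm hi]
  rw [rho, hcoset, filter_image, card_image_of_injOn, Nat.count_eq_card_filter_range]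
  exact iterate_injOn_Iio_minimalPeriod.mono fun j hj => mem_range.1 (mem_filter.1 hj).1

lemma count_odd_iterate_cyclicShift (hi : i < 2 ^ m - 1) :
    Nat.count (fun j => ¬ (cyclicShift m)^[j] i % 2 = 0) m = wt2 i := by
  have hper : Periodic (fun j => ¬ (cyclicShift m)^[j] i % 2 = 0) m := fun j => by
    simp only [iterate_add_apply, (isPeriodicPt_cyclicShift_self hi).eq]
  rw [← Nat.filter_Ico_card_eq_of_periodic 1 m _ hper,
    ← count_bits_eq_wt2 m i (by omega), Nat.count_eq_card_filter_range]
  have hbit : ∀ j ∈ Ico 1 (1 + m),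
      ¬ (cyclicShift m)^[j] i % 2 = 0 ↔ i / 2 ^ (m - j) % 2 = 1 := fun j hj => by
    rw [mem_Ico] at hj
    rw [iterate_cyclicShift_mod_two hi hj.1 (by omega)]
    omega
  refine card_nbij' (m - ·) (m - ·) ?_ ?_ ?_ ?_
  · intro j hj
    simp only [coe_filter, Set.mem_ofPred_eq, mem_range] at hj ⊢
    exact ⟨by grind, (hbit j hj.1).1 hj.2⟩
  · intro b hb
    simp only [coe_filter, Set.mem_ofPred_eq, mem_range] at hb ⊢
    have hb' : m - b ∈ Ico 1 (1 + m) := by grind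
    exact ⟨hb', (hbit _ hb').2 (by rw [Nat.sub_sub_self hb.1.le]; exact hb.2)⟩
  · intro j hj
    simp only [coe_filter, Set.mem_ofPred_eq, mem_Ico] at hj
    dsimp only
    omega
  · intro b hb
    simp only [coe_filter, Set.mem_ofPred_eq, mem_range] at hb
    dsimp only
    omega

lemma vv_eq_of_lt (hm : 0 < m) (hi : i < 2 ^ m - 1) : vv m i = (m - wt2 i) % 2 := by
  set L := minimalPeriod (cyclicShift m) i
  have hLm : L ∣ m := (isPeriodicPt_cyclicShift_self hi).minimalPeriod_dvd
  have hper : Periodic (fun j => (cyclicShift m)^[j] i % 2 = 0) L := fun j => by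
    simp only [iterate_add_minimalPeriod_eq, L]
  have hcount : m / L * rho m i = m - wt2 i := by
    rw [rho_eq_count hm hi, ← Nat.count_mul_of_periodic hper, Nat.mul_div_cancel' hLm,
      ← count_odd_iterate_cyclicShift hi]
    have := Nat.count_add_count_not (fun j => (cyclicShift m)^[j] i % 2 = 0) m
    omega
  rw [vv, ell_eq_minimalPeriod hm hi, mul_comm m, Nat.mul_div_assoc _ hLm, mul_comm, hcount]

end CyclicShift

lemma mem_Tset_iff {m j x : ℕ} (hm : 0 < m) :
    x ∈ Tset m j ↔ x < 2 ^ m - 1 ∧ (m - wt2 x) % 2 = j := by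
  simp only [Tset, Finset.mem_filter, Finset.mem_range]
  exact and_congr_right fun hx => by rw [vv_eq_of_lt hm hx]

lemma two_pow_sub_one_mul_lt {t u k : ℕ} (hu : 0 < u) (hk : k ≤ 2 ^ u) :
    (2 ^ t - 1) * k < 2 ^ (t + u) - 1 := by
  have h2u : 2 ≤ 2 ^ u := Nat.le_self_pow hu.ne' 2
  have hle : 2 ^ u ≤ 2 ^ (t + u) := Nat.pow_le_pow_right two_pos (Nat.le_add_left u t)
  calc (2 ^ t - 1) * k ≤ (2 ^ t - 1) * 2 ^ u := Nat.mul_le_mul_left _ hk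
    _ = 2 ^ (t + u) - 2 ^ u := by rw [Nat.sub_mul, one_mul, pow_add]
    _ < 2 ^ (t + u) - 1 := by omega

lemma mul_sub_mod_eq_sub {a k n : ℕ} (hk : k ≤ n) (hpos : 0 < a * k) (hlt : a * k < n) :
    a * (n - k) % n = n - a * k := by
  refine Nat.mod_eq_of_modEq (Nat.ModEq.add_right_cancel' (a * k) ?_) (by omega)
  rw [← mul_add, Nat.sub_add_cancel hk, Nat.sub_add_cancel hlt.le]
  simp [Nat.ModEq]

theorem stmt6 (m : ℕ) (hm4 : m % 4 = 0) (hm : 4 ≤ m) (k : ℕ)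
    (hk : (1 ≤ k ∧ k ≤ 2 ^ ((m - 2) / 2)) ∨
      (2 ^ m - 2 ^ ((m - 2) / 2) - 1 ≤ k ∧ k ≤ 2 ^ m - 2)) :
    (2 ^ ((m + 2) / 2) - 1) * k % (2 ^ m - 1) ∈ Tset m 1 := by
  obtain ⟨s, rfl⟩ : ∃ s, m = 2 * s := ⟨m / 2, by omega⟩
  rw [show (2 * s + 2) / 2 = s + 1 by omega]
  rw [show (2 * s - 2) / 2 = s - 1 by omega] at hk
  have hsmall : ∀ {k}, 1 ≤ k → k ≤ 2 ^ (s - 1) →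
      (2 ^ (s + 1) - 1) * k < 2 ^ (2 * s) - 1 ∧ wt2 ((2 ^ (s + 1) - 1) * k) = s + 1 :=
    fun h1 h2 => ⟨show s + 1 + (s - 1) = 2 * s by omega ▸ two_pow_sub_one_mul_lt (by omega) h2,
      wt2_two_pow_sub_one_mul h1 (h2.trans (Nat.pow_le_pow_right two_pos (by omega)))⟩
  rw [mem_Tset_iff (by omega)]
  rcases hk with ⟨hk1, hk2⟩ | ⟨hk1, hk2⟩
  · obtain ⟨hlt, hwt⟩ := hsmall hk1 hk2
    rw [Nat.mod_eq_of_lt hlt, hwt]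
    exact ⟨hlt, by omega⟩
  · have hpow : 2 * 2 ^ (s - 1) ≤ 2 ^ (2 * s) := by
      rw [← pow_succ']; exact Nat.pow_le_pow_right two_pos (by omega)
    have hpow1 : 1 ≤ 2 ^ (s - 1) := Nat.one_le_two_pow
    obtain ⟨k, hkn, rfl⟩ : ∃ k', k' ≤ 2 ^ (2 * s) - 1 ∧ k = 2 ^ (2 * s) - 1 - k' :=
      ⟨2 ^ (2 * s) - 1 - k, by omega, by omega⟩
    obtain ⟨hlt, hwt⟩ := hsmall (k := k) (by omega) (by omega)
    have hpos : 0 < (2 ^ (s + 1) - 1) * k :=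
      Nat.mul_pos (Nat.sub_pos_of_lt (Nat.one_lt_two_pow (by omega))) (by omega)
    rw [mul_sub_mod_eq_sub hkn hpos hlt, wt2_two_pow_sub_one_sub _ _ (by omega), hwt]
    exact ⟨by omega, by omega⟩
end
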